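/- arXiv:2508.20222 — 3 statements merged into one kernel-verified Lean document; each statement's English description precedes it below -/
import Mathlib

section
/- For every positive integer n, any terminal state reached by a play of the ordered Zeckendorf game on n is the Zeckendorf decomposition of n written in strictly increasing order: the list of indices (i_1, …, i_k) is strictly increasing, satisfies i_{j+1} ≥ i_j + 2 for all j (no two consecutive Fibonacci indices), and F_{i_1} + … + F_{i_k} = n. In particular all completed plays on n end at the same state. -/
/-- Fibonacci numbers indexed so that `F 1 = 1`, `F 2 = 2`,
and `F (i+1) = F i + F (i-1)`. -/
def F (i : ℕ) : ℕ := Nat.fib (i + 1)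

/-- A single legal move of the ordered Zeckendorf game, acting on an
adjacent pair of entries of the list of indices. -/
inductive Move : List ℕ → List ℕ → Prop
  | merge (a b : List ℕ) (i : ℕ) (hi : 1 ≤ i) :
      Move (a ++ [i, i + 1] ++ b) (a ++ [i + 2] ++ b)
  | mergeOnes (a b : List ℕ) :
      Move (a ++ [1, 1] ++ b) (a ++ [2] ++ b)
  | split (a b : List ℕ) (i : ℕ) (hi : 2 < i) :
      Move (a ++ [i, i] ++ b) (a ++ [i - 2, i + 1] ++ b)
  | splitTwos (a b : List ℕ) :
      Move (a ++ [2, 2] ++ b) (a ++ [1, 3] ++ b)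
  | switch (a b : List ℕ) (i j : ℕ) (hj : 1 ≤ j) (hij : j < i) :
      Move (a ++ [i, j] ++ b) (a ++ [j, i] ++ b)

/-- A play of the ordered Zeckendorf game on `n` with `m` moves:
the initial state is `n` copies of `1`, and each step is a legal move. -/
def IsPlay (n : ℕ) (s : ℕ → List ℕ) (m : ℕ) : Prop :=
  s 0 = List.replicate n 1 ∧ ∀ t < m, Move (s t) (s (t + 1))

/-- A state is terminal if no legal move applies to it. -/
def Terminal (S : List ℕ) : Prop := ∀ T, ¬ Move S T

/-- The total Fibonacci value of a state. -/
def val (S : List ℕ) : ℕ := (S.map F).sum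

/-- The monovariant `f(S) = Σ_{j=1}^k (k+1−j)·F_{i_j}` (here with
`j` running over 0-based positions, so the weight of position `j` is
`k − j`). -/
def f (S : List ℕ) : ℕ := ∑ j : Fin S.length, (S.length - (j : ℕ)) * F (S.get j)

/-- `M n` is the maximal number of moves in a completed play of the
ordered Zeckendorf game on `n`. -/
noncomputable def M (n : ℕ) : ℕ :=
  sSup {m | ∃ s : ℕ → List ℕ, IsPlay n s m ∧ Terminal (s m)}

/-- The golden ratio `φ = (1+√5)/2`. -/
noncomputable def phi : ℝ := (1 + Real.sqrt 5) / 2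

/-- Logarithm to base `φ`. -/
noncomputable def logphi (x : ℝ) : ℝ := Real.log x / Real.log phi

/-!
Every move preserves the total value `val` and keeps all indices positive, so a terminal state
of a play on `n` has value `n`. In a terminal state with positive entries, each adjacent pair
`(x, y)` must satisfy `x + 2 ≤ y`, since otherwise one of merge, merge ones, split, split twos or
switch would apply. Such a state is a Zeckendorf representation of `n`, which is unique.
-/

lemma F_add_two (i : ℕ) : F (i + 2) = F i + F (i + 1) := Nat.fib_add_two

lemma F_sub_two_add_F_succ {i : ℕ} (hi : 2 < i) : F (i - 2) + F (i + 1) = F i + F i := by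
  obtain ⟨k, rfl⟩ : ∃ k, i = k + 3 := ⟨i - 3, by omega⟩
  simp only [show k + 3 - 2 = k + 1 by omega, show k + 3 + 1 = k + 2 + 2 by omega,
    show k + 3 = k + 1 + 2 by omega, F_add_two]
  ring

namespace Move

lemma val_eq {S T : List ℕ} (h : Move S T) : val T = val S := by
  cases h with
  | merge a b i => simp [val, F_add_two]; ring
  | split a b i hi => have := F_sub_two_add_F_succ hi; simp [val]; omega
  | mergeOnes | splitTwos | switch => simp [val, F, Nat.fib_add_two]; ring

lemma forall_pos {S T : List ℕ} (h : Move S T) (hS : ∀ x ∈ S, 0 < x) : ∀ x ∈ T, 0 < x := by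
  cases h <;> simp only [List.mem_append, List.mem_cons, List.not_mem_nil] at hS ⊢ <;> grind

lemma cons {S T : List ℕ} (x : ℕ) (h : Move S T) : Move (x :: S) (x :: T) := by
  cases h with
  | merge a b i hi => exact merge (x :: a) b i hi
  | mergeOnes a b => exact mergeOnes (x :: a) b
  | split a b i hi => exact split (x :: a) b i hi
  | splitTwos a b => exact splitTwos (x :: a) b
  | switch a b i j hj hij => exact switch (x :: a) b i j hj hij

end Move

namespace Terminal

lemma of_cons {x : ℕ} {S : List ℕ} (h : Terminal (x :: S)) : Terminal S :=
  fun T hT => h (x :: T) (hT.cons x)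

lemma add_two_le {x y : ℕ} {S : List ℕ} (h : Terminal (x :: y :: S)) (hx : 0 < x)
    (hy : 0 < y) : x + 2 ≤ y := by
  by_contra! hlt
  rcases lt_trichotomy x y with hxy | rfl | hxy
  · obtain rfl : y = x + 1 := by omega
    exact h _ (.merge [] S x hx)
  · rcases Nat.lt_or_ge 2 x with h2 | h2
    · exact h _ (.split [] S x h2)
    · interval_cases x
      · exact h _ (.mergeOnes [] S)
      · exact h _ (.splitTwos [] S)
  · exact h _ (.switch [] S x y hy hxy)

lemma isChain {S : List ℕ} (h : Terminal S) (hS : ∀ x ∈ S, 0 < x) :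
    S.IsChain (fun a b => a + 2 ≤ b) := by
  induction S with
  | nil => exact .nil
  | cons x S ih =>
    cases S with
    | nil => exact .singleton x
    | cons y S =>
      refine .cons_cons (h.add_two_le (hS x (by simp)) (hS y (by simp))) (ih h.of_cons ?_)
      exact fun z hz => hS z (List.mem_cons_of_mem x hz)

end Terminal

lemma IsPlay.induction {n m : ℕ} {s : ℕ → List ℕ} {P : List ℕ → Prop} (hs : IsPlay n s m)
    (h₀ : P (List.replicate n 1)) (hmove : ∀ S T, Move S T → P S → P T) : P (s m) := by
  induction m with
  | zero => exact hs.1 ▸ h₀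
  | succ m ih =>
    exact hmove _ _ (hs.2 m m.lt_succ_self) (ih ⟨hs.1, fun t ht => hs.2 t (by omega)⟩)

lemma IsPlay.val_eq {n m : ℕ} {s : ℕ → List ℕ} (hs : IsPlay n s m) : val (s m) = n :=
  hs.induction (P := fun S => val S = n) (by simp [val, F]) fun _ _ h hS => h.val_eq.trans hS

lemma IsPlay.forall_pos {n m : ℕ} {s : ℕ → List ℕ} (hs : IsPlay n s m) : ∀ x ∈ s m, 0 < x :=
  hs.induction (P := fun S => ∀ x ∈ S, 0 < x)
    (fun x hx => by simp [List.eq_of_mem_replicate hx]) fun _ _ h => h.forall_pos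

/-- Mathlib's Zeckendorf representations list `Nat.fib` indices in decreasing order, and
`F i = Nat.fib (i + 1)`; hence the shift and the reversal. -/
lemma reverse_map_succ_eq_zeckendorf {S : List ℕ} (hS₀ : ∀ x ∈ S, 0 < x)
    (hS : S.IsChain (fun a b => a + 2 ≤ b)) : (S.map (· + 1)).reverse = Nat.zeckendorf (val S) := by
  have hrep : (S.map (· + 1)).reverse.IsZeckendorfRep := by
    rw [List.IsZeckendorfRep, ← List.reverse_cons, List.isChain_reverse, List.isChain_cons,
      List.isChain_map]
    refine ⟨fun y hy => ?_, hS.imp fun a b h => by omega⟩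
    cases S with
    | nil => simp at hy
    | cons x S =>
      have := hS₀ x List.mem_cons_self
      simp only [List.map_cons, List.head?_cons, Option.mem_some_iff] at hy
      omega
  rw [← Nat.zeckendorf_sum_fib hrep, List.map_reverse, List.sum_reverse, List.map_map]
  rfl

theorem stmt_1_general (n : ℕ) :
    (∀ (s : ℕ → List ℕ) (m : ℕ), IsPlay n s m → Terminal (s m) →
      (s m).Pairwise (· < ·) ∧
      List.Chain' (fun a b => a + 2 ≤ b) (s m) ∧
      val (s m) = n) ∧
    (∀ (s s' : ℕ → List ℕ) (m m' : ℕ), IsPlay n s m → Terminal (s m) →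
      IsPlay n s' m' → Terminal (s' m') → s m = s' m') := by
  have hchain {s : ℕ → List ℕ} {m : ℕ} (hs : IsPlay n s m) (ht : Terminal (s m)) :
      (s m).IsChain (fun a b => a + 2 ≤ b) :=
    ht.isChain hs.forall_pos
  have hzeck {s : ℕ → List ℕ} {m : ℕ} (hs : IsPlay n s m) (ht : Terminal (s m)) :
      ((s m).map (· + 1)).reverse = Nat.zeckendorf n :=
    hs.val_eq ▸ reverse_map_succ_eq_zeckendorf hs.forall_pos (hchain hs ht)
  refine ⟨fun s m hs ht => ⟨((hchain hs ht).imp fun _ _ h => by omega).pairwise,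
    hchain hs ht, hs.val_eq⟩, fun s s' m m' hs ht hs' ht' => ?_⟩
  have h := (hzeck hs ht).trans (hzeck hs' ht').symm
  rwa [List.reverse_inj, List.map_inj_right fun _ _ => Nat.succ_inj.1] at h

theorem stmt_1 (n : ℕ) (hn : 1 ≤ n) :
    (∀ (s : ℕ → List ℕ) (m : ℕ), IsPlay n s m → Terminal (s m) →
      (s m).Pairwise (· < ·) ∧
      List.Chain' (fun a b => a + 2 ≤ b) (s m) ∧
      val (s m) = n) ∧
    (∀ (s s' : ℕ → List ℕ) (m m' : ℕ), IsPlay n s m → Terminal (s m) →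
      IsPlay n s' m' → Terminal (s' m') → s m = s' m') :=
  stmt_1_general n
end

section
/- Every play of the ordered Zeckendorf game on n has length at most n(n−1)/2. In particular, the maximal length M(n) of a completed play satisfies M(n) ≤ n(n−1)/2. -/
def g : List ℕ → ℕ
  | [] => 0
  | x :: s => (s.length + 1) * F x + g s

lemma F_pos (i : ℕ) : 0 < F i := Nat.fib_pos.2 (by omega)

lemma F_lt {i j : ℕ} (hj : 1 ≤ j) (hij : j < i) : F j < F i :=
  lt_of_lt_of_le (Nat.fib_lt_fib_succ (by omega)) (Nat.fib_mono (by omega))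

lemma f_eq_g (S : List ℕ) : f S = g S := by
  induction S with
  | nil => simp [f, g]
  | cons x s ih =>
    simp only [f, g, List.length_cons] at *
    rw [Fin.sum_univ_succ]
    simp only [List.get_eq_getElem] at ih
    simp [Nat.succ_sub_succ, ih]

lemma val_append (a b : List ℕ) : val (a ++ b) = val a + val b := by
  simp [val]

lemma g_append (a b : List ℕ) : g (a ++ b) = g a + b.length * val a + g b := by
  induction a with
  | nil => simp [g, val]
  | cons x a ih =>
    simp only [List.cons_append]
    show ((a ++ b).length + 1) * F x + g (a ++ b) = _
    rw [ih]
    simp only [g, List.length_append, List.length_cons, val, List.map_cons, List.sum_cons]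
    ring

lemma g_lt_of (x y : List ℕ) (hval : val y = val x) (hlen : y.length ≤ x.length)
    (hg : g y < g x) (a b : List ℕ) : g (a ++ y ++ b) < g (a ++ x ++ b) := by
  rw [List.append_assoc, List.append_assoc, g_append, g_append, g_append, g_append,
    List.length_append, List.length_append, hval]
  have h1 : (y.length + b.length) * val a ≤ (x.length + b.length) * val a :=
    Nat.mul_le_mul_right _ (by omega)
  linarith

lemma val_move {S T : List ℕ} (h : Move S T) : val T = val S := by
  induction h with
  | merge a b i hi =>
      simp [val_append, val]
      have := F_add_two i; omega
  | mergeOnes a b =>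
      have h3 : Nat.fib 3 = 2 := by decide
      simp [val_append, val, F]; omega
  | split a b i hi =>
      obtain ⟨k, rfl⟩ : ∃ k, i = k + 3 := ⟨i - 3, by omega⟩
      simp [val_append, val, show k + 3 - 2 = k + 1 by omega]
      have h1 : F (k + 3) = F (k + 1) + F (k + 2) := F_add_two (k + 1)
      have h2 : F (k + 4) = F (k + 2) + F (k + 3) := F_add_two (k + 2)
      have h0 : F (k + 3 + 1) = F (k + 4) := rfl
      omega
  | splitTwos a b =>
      have h3 : Nat.fib 3 = 2 := by decide
      have h4 : Nat.fib 4 = 3 := by decide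
      simp [val_append, val, F]; omega
  | switch a b i j hj hij => simp [val_append, val]; ring

lemma f_move {S T : List ℕ} (h : Move S T) : f T < f S := by
  rw [f_eq_g, f_eq_g]
  induction h with
  | merge a b i hi =>
      refine g_lt_of _ _ ?_ (by simp) ?_ a b
      · simp [val]; have := F_add_two i; omega
      · simp [g]; have := F_add_two i; have := F_pos i; omega
  | mergeOnes a b =>
      refine g_lt_of _ _ ?_ (by simp) ?_ a b
      · have h3 : Nat.fib 3 = 2 := by decide
        simp [val, F]; omega
      · have h3 : Nat.fib 3 = 2 := by decide
        simp [g, F]; omega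
  | split a b i hi =>
      obtain ⟨k, rfl⟩ : ∃ k, i = k + 3 := ⟨i - 3, by omega⟩
      refine g_lt_of _ _ ?_ (by simp) ?_ a b
      · simp [val, show k + 3 - 2 = k + 1 by omega]
        have h1 : F (k + 3) = F (k + 1) + F (k + 2) := F_add_two (k + 1)
        have h2 : F (k + 4) = F (k + 2) + F (k + 3) := F_add_two (k + 2)
        have h0 : F (k + 3 + 1) = F (k + 4) := rfl
        omega
      · simp [g, show k + 3 - 2 = k + 1 by omega]
        have h1 : F (k + 3) = F (k + 1) + F (k + 2) := F_add_two (k + 1)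
        have h2 : F (k + 4) = F (k + 2) + F (k + 3) := F_add_two (k + 2)
        have h0 : F (k + 3 + 1) = F (k + 4) := rfl
        have h3 := F_pos (k + 2); omega
  | splitTwos a b =>
      refine g_lt_of _ _ ?_ (by simp) ?_ a b
      · have h3 : Nat.fib 3 = 2 := by decide
        have h4 : Nat.fib 4 = 3 := by decide
        simp [val, F]; omega
      · have h3 : Nat.fib 3 = 2 := by decide
        have h4 : Nat.fib 4 = 3 := by decide
        simp [g, F]; omega
  | switch a b i j hj hij =>
      refine g_lt_of _ _ ?_ (by simp) ?_ a b
      · simp [val]; ring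
      · simp [g]; have := F_lt hj hij; omega

lemma val_le_g (S : List ℕ) : val S ≤ g S := by
  induction S with
  | nil => simp [val, g]
  | cons x s ih =>
    have : F x ≤ (s.length + 1) * F x := Nat.le_mul_of_pos_left _ (by omega)
    simp only [val, g, List.map_cons, List.sum_cons] at *
    linarith

lemma val_replicate (n : ℕ) : val (List.replicate n 1) = n := by
  simp [val, List.map_replicate, List.sum_replicate, F]

lemma g_replicate (n : ℕ) : g (List.replicate n 1) = n * (n + 1) / 2 := by
  induction n with
  | zero => simp [g]
  | succ n ih =>
    rw [List.replicate_succ]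
    simp only [g, List.length_replicate, ih]
    have h1 : F 1 = 1 := by decide
    have h2 : (n + 1) * (n + 1 + 1) = n * (n + 1) + 2 * (n + 1) := by ring
    rw [h1]; omega


theorem stmt_2 (n : ℕ) :
    (∀ (s : ℕ → List ℕ) (m : ℕ), IsPlay n s m → m ≤ n * (n - 1) / 2) ∧
    M n ≤ n * (n - 1) / 2 := by
  have main : ∀ (s : ℕ → List ℕ) (m : ℕ), IsPlay n s m → m ≤ n * (n - 1) / 2 := by
    intro s m hp
    obtain ⟨h0, hstep⟩ := hp
    have key : ∀ t, t ≤ m → f (s t) + t ≤ f (s 0) := by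
      intro t
      induction t with
      | zero => simp
      | succ t ih =>
        intro ht
        have h1 := ih (by omega)
        have h2 := f_move (hstep t (by omega))
        omega
    have hval : val (s m) = n := by
      have : ∀ t, t ≤ m → val (s t) = n := by
        intro t
        induction t with
        | zero => intro _; rw [h0, val_replicate]
        | succ t ih =>
          intro ht
          rw [val_move (hstep t (by omega)), ih (by omega)]
      exact this m le_rfl
    have h1 := key m le_rfl
    have h2 : val (s m) ≤ f (s m) := by rw [f_eq_g]; exact val_le_g (s m)
    have h4 : f (s 0) = n * (n + 1) / 2 := by rw [h0, f_eq_g, g_replicate]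
    have h5 : n * (n + 1) = n * (n - 1) + 2 * n := by
      cases n with
      | zero => simp
      | succ k => simp only [Nat.succ_sub_one]; ring
    omega
  refine ⟨main, ?_⟩
  exact csSup_le' (by rintro m ⟨s, hp, -⟩; exact main s m hp)
end

section
/- If a state S' of the ordered Zeckendorf game is obtained from a state S by a merge move, a merge-ones move, a split move, or a split-twos move, then f(S) − f(S') ≥ N/4, where N is the total Fibonacci value of the entries involved in the move (N = F_i + F_{i+1} = F_{i+2} for a merge of (i, i+1); N = 2 for a merge of ones; N = 2·F_i for a split of (i, i) with i > 2; N = 4 for a split of (2, 2)). -/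
lemma f_nil : f [] = 0 := by simp [f]

lemma f_cons (x : ℕ) (s : List ℕ) : f (x :: s) = (s.length + 1) * F x + f s := by
  simp [f, Fin.sum_univ_succ, Nat.succ_sub_succ]

lemma f_append (x y : List ℕ) : f (x ++ y) = f x + y.length * val x + f y := by
  induction x with
  | nil => simp [f_nil, val]
  | cons h t ih =>
      simp only [List.cons_append, f_cons, ih, List.length_append, val, List.map_cons,
        List.sum_cons]
      ring

lemma FF (i : ℕ) : F (i + 2) = F (i + 1) + F i := by
  simp [F, Nat.fib_add_two]; omega

lemma F_mono (i : ℕ) : F i ≤ F (i + 1) := Nat.fib_mono (by omega)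

theorem stmt_19 (a b : List ℕ) :
    (∀ i : ℕ, 1 ≤ i →
      F (i + 2) + 4 * f (a ++ [i + 2] ++ b) ≤ 4 * f (a ++ [i, i + 1] ++ b)) ∧
    (2 + 4 * f (a ++ [2] ++ b) ≤ 4 * f (a ++ [1, 1] ++ b)) ∧
    (∀ i : ℕ, 2 < i →
      2 * F i + 4 * f (a ++ [i - 2, i + 1] ++ b) ≤ 4 * f (a ++ [i, i] ++ b)) ∧
    (4 + 4 * f (a ++ [1, 3] ++ b) ≤ 4 * f (a ++ [2, 2] ++ b)) := by
  refine ⟨?_, ?_, ?_, ?_⟩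
  · intro i hi
    simp only [f_append, f_cons, f_nil, val, List.map_cons, List.map_nil, List.map_append, List.sum_append, List.sum_cons,
      List.sum_nil, List.length_cons, List.length_nil, FF]
    have h1 := F_mono i
    have h2 : F (i + 1) ≤ 2 * F i := by
      obtain ⟨j, rfl⟩ : ∃ j, i = j + 1 := ⟨i - 1, by omega⟩
      rw [FF]; have := F_mono j; omega
    generalize (List.map F a).sum = A
    generalize b.length = L
    generalize f a = x
    generalize f b = y
    generalize F (i + 1) = p at h1 h2 ⊢
    generalize F i = q at h1 h2 ⊢
    linarith
  · simp only [f_append, f_cons, f_nil, val, List.map_cons, List.map_nil, List.map_append, List.sum_append, List.sum_cons,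
      List.sum_nil, List.length_cons, List.length_nil,
      show F 1 = 1 from by decide, show F 2 = 2 from by decide]
    generalize (List.map F a).sum = A
    generalize b.length = L
    generalize f a = x
    generalize f b = y
    linarith
  · intro i hi
    obtain ⟨k, rfl⟩ : ∃ k, i = k + 3 := ⟨i - 3, by omega⟩
    have h : k + 3 - 2 = k + 1 := by omega
    simp only [h, f_append, f_cons, f_nil, val, List.map_cons, List.map_nil, List.map_append, List.sum_append, List.sum_cons,
      List.sum_nil, List.length_cons, List.length_nil]
    have e1 : F (k + 3 + 1) = F (k + 3) + F (k + 2) := FF (k + 2)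
    have e2 : F (k + 3) = F (k + 2) + F (k + 1) := FF (k + 1)
    have h1 : F (k + 1) ≤ F (k + 2) := F_mono (k + 1)
    generalize (List.map F a).sum = A
    generalize b.length = L
    generalize f a = x
    generalize f b = y
    generalize F (k + 3 + 1) = p at e1 ⊢
    generalize F (k + 3) = q at e1 e2 ⊢
    generalize F (k + 2) = r at e1 e2 h1 ⊢
    generalize F (k + 1) = u at e2 h1 ⊢
    have hL : L * (A + (u + (p + 0))) = L * (A + (q + (q + 0))) := by
      rw [e1, e2]; ring
    linarith
  · simp only [f_append, f_cons, f_nil, val, List.map_cons, List.map_nil, List.map_append, List.sum_append, List.sum_cons,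
      List.sum_nil, List.length_cons, List.length_nil]
    simp only [show F 1 = 1 from by decide, show F 2 = 2 from by decide,
      show F 3 = 3 from by decide]
    generalize (List.map F a).sum = A
    generalize b.length = L
    generalize f a = x
    generalize f b = y
    linarith
end
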